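/- Let 𝒞 : (Fin K → ZMod 2) →ₗ[ZMod 2] (Fin N → ZMod 2) be an injective linear encoding map whose range (the code) is cyclic, i.e., closed under right cyclic shift by one position, and let D : (Fin N → ZMod 2) →ₗ[ZMod 2] (Fin K → ZMod 2) be a linear decoding map satisfying D(𝒞(U)) = U for all U and 𝒞(D(c)) = c for every c in the range of 𝒞. Fix source packets U^A, U^B : Fin K → ZMod 2, a symbol misalignment τ : ℕ, and let the relay's network-coded packet be U^R = U^A + D((𝒞(U^B))_{(τ)}). Then both end nodes can recover each other's packet: (i) node A recovers U^B, since 𝒞(U^R + U^A) = (𝒞(U^B))_{(τ)}, the left cyclic shift by τ positions of 𝒞(U^R + U^A) equals 𝒞(U^B), and hence D applied to that left-shifted vector equals U^B; and (ii) node B recovers U^A, since D((𝒞(U^B))_{(τ)}) + U^R = U^A. -/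

import Mathlib

/-- Right cyclic shift of `v` by `s` positions: `(shiftR s v) j = v (j - s)`, index mod `n`. -/
def shiftR {n : ℕ} (s : ℕ) (v : Fin n → ZMod 2) : Fin n → ZMod 2 :=
  fun j => v ⟨(j.val + (n - s % n)) % n, Nat.mod_lt _ j.pos⟩

/-- Left cyclic shift of `v` by `s` positions: `(shiftL s v) j = v (j + s)`, index mod `n`. -/
def shiftL {n : ℕ} (s : ℕ) (v : Fin n → ZMod 2) : Fin n → ZMod 2 :=
  fun j => v ⟨(j.val + s) % n, Nat.mod_lt _ j.pos⟩

/-! Since `x + x = 0` over `ZMod 2`, adding `U^A` to `U^R` leaves `D((𝒞 U^B)_{(τ)})`, and adding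
`U^R` to that leaves `U^A`. Closure of the code under one right shift gives closure under `τ`
shifts, so `(𝒞 U^B)_{(τ)}` is a codeword, hence fixed by `𝒞 ∘ D`; undoing the shift and decoding
returns `U^B`. -/

open Fin.NatCast

lemma shiftR_apply {n : ℕ} [NeZero n] (s : ℕ) (v : Fin n → ZMod 2) (j : Fin n) :
    shiftR s v j = v (j - (s : Fin n)) := by
  unfold shiftR
  congr 1
  ext
  simp [Fin.sub_def, Fin.val_natCast, Nat.add_comm]

lemma shiftL_apply {n : ℕ} [NeZero n] (s : ℕ) (v : Fin n → ZMod 2) (j : Fin n) :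
    shiftL s v j = v (j + (s : Fin n)) := by
  unfold shiftL
  congr 1
  ext
  simp [Fin.add_def, Fin.val_natCast]

-- An index `j : Fin n` rules out `n = 0`, which the index arithmetic needs.
lemma shiftL_shiftR {n : ℕ} (s : ℕ) (v : Fin n → ZMod 2) : shiftL s (shiftR s v) = v := by
  funext j
  have : NeZero n := ⟨j.pos.ne'⟩
  rw [shiftL_apply, shiftR_apply, add_sub_cancel_right]

lemma shiftR_zero {n : ℕ} (v : Fin n → ZMod 2) : shiftR 0 v = v := by
  funext j
  have : NeZero n := ⟨j.pos.ne'⟩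
  rw [shiftR_apply, Nat.cast_zero, sub_zero]

lemma shiftR_succ {n : ℕ} (s : ℕ) (v : Fin n → ZMod 2) :
    shiftR (s + 1) v = shiftR 1 (shiftR s v) := by
  funext j
  have : NeZero n := ⟨j.pos.ne'⟩
  simp only [shiftR_apply, Nat.cast_add, Nat.cast_one, sub_add_eq_sub_sub_swap]

lemma shiftR_mem_of_shiftR_one_mem {n : ℕ} {S : Set (Fin n → ZMod 2)}
    (hS : ∀ c ∈ S, shiftR 1 c ∈ S) {c : Fin n → ZMod 2} (hc : c ∈ S) (s : ℕ) :
    shiftR s c ∈ S := by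
  induction s with
  | zero => rwa [shiftR_zero]
  | succ s ih => rw [shiftR_succ]; exact hS _ ih

theorem stmt5_general {K N : ℕ}
    (𝒞 : (Fin K → ZMod 2) →ₗ[ZMod 2] (Fin N → ZMod 2))
    (hcyc : ∀ c : Fin N → ZMod 2, (∃ U, 𝒞 U = c) → ∃ U', 𝒞 U' = shiftR 1 c)
    (D : (Fin N → ZMod 2) →ₗ[ZMod 2] (Fin K → ZMod 2))
    (hD : ∀ U, D (𝒞 U) = U)
    (hDright : ∀ c : Fin N → ZMod 2, (∃ U, 𝒞 U = c) → 𝒞 (D c) = c)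
    (UA UB : Fin K → ZMod 2) (τ : ℕ)
    (UR : Fin K → ZMod 2) (hUR : UR = UA + D (shiftR τ (𝒞 UB))) :
    (𝒞 (UR + UA) = shiftR τ (𝒞 UB) ∧
      shiftL τ (𝒞 (UR + UA)) = 𝒞 UB ∧
      D (shiftL τ (𝒞 (UR + UA))) = UB) ∧
    D (shiftR τ (𝒞 UB)) + UR = UA := by
  have hUR_add_UA : UR + UA = D (shiftR τ (𝒞 UB)) := by
    rw [hUR, add_right_comm, ZModModule.add_self, zero_add]
  have hcodeword : shiftR τ (𝒞 UB) ∈ Set.range 𝒞 :=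
    shiftR_mem_of_shiftR_one_mem hcyc (Set.mem_range_self UB) τ
  have hA : 𝒞 (UR + UA) = shiftR τ (𝒞 UB) := by
    rw [hUR_add_UA]
    exact hDright _ hcodeword
  have hshift : shiftL τ (𝒞 (UR + UA)) = 𝒞 UB := by
    rw [hA, shiftL_shiftR]
  refine ⟨⟨hA, hshift, by rw [hshift, hD]⟩, ?_⟩
  rw [← hUR_add_UA, add_comm UR, add_assoc, ZModModule.add_self, add_zero]

/-- With a cyclic linear code (range of the injective linear encoder `𝒞` is closed
under right cyclic shift by one) and a linear decoder `D` (two-sided inverse on the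
code), if the relay's network-coded packet is `U^R = U^A + D((𝒞 U^B)_{(τ)})`, then
both end nodes can recover each other's packet. -/
theorem stmt5 {K N : ℕ}
    (𝒞 : (Fin K → ZMod 2) →ₗ[ZMod 2] (Fin N → ZMod 2))
    (h𝒞inj : Function.Injective 𝒞)
    (hcyc : ∀ c : Fin N → ZMod 2, (∃ U, 𝒞 U = c) → ∃ U', 𝒞 U' = shiftR 1 c)
    (D : (Fin N → ZMod 2) →ₗ[ZMod 2] (Fin K → ZMod 2))
    (hD : ∀ U, D (𝒞 U) = U)
    (hDright : ∀ c : Fin N → ZMod 2, (∃ U, 𝒞 U = c) → 𝒞 (D c) = c)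
    (UA UB : Fin K → ZMod 2) (τ : ℕ)
    (UR : Fin K → ZMod 2) (hUR : UR = UA + D (shiftR τ (𝒞 UB))) :
    (𝒞 (UR + UA) = shiftR τ (𝒞 UB) ∧
      shiftL τ (𝒞 (UR + UA)) = 𝒞 UB ∧
      D (shiftL τ (𝒞 (UR + UA))) = UB) ∧
    D (shiftR τ (𝒞 UB)) + UR = UA :=
  stmt5_general 𝒞 hcyc D hD hDright UA UB τ UR hUR
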